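/- arXiv:2409.03751 — 4 statements merged into one kernel-verified Lean document; each statement's English description precedes it below -/
import Mathlib

section
/- For every n, k ∈ ℕ with n ≥ 1 and every a ∈ {0,1,…,n−1}^k, the function f^a is monotone: for all u, v ∈ {0,1,…,n−1}^k with u ≤ v (componentwise), f^a(u) ≤ f^a(v) (componentwise). -/
/-!
Stepping up at coordinate `i` asks for lower bounds `a j ≤ v j` on the prefix `j < i`, so it is
inherited by every larger vector with the same `i`-th coordinate; dually, stepping down is inherited
by smaller vectors. So if `u ≤ v` and `u i = v i`, the two coordinates move alike, and if
`u i < v i`, unit steps cannot cross except when `u` steps up and `v` steps down, which forces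
`u i < a i < v i`.
-/

/-- The function `f^a` from Definition 2 of the paper, defined coordinatewise:
`f^a_i(v) = v_i - 1` if `v_i > a_i` and `v_j ≤ a_j` for all `j < i`;
`f^a_i(v) = v_i + 1` if `v_i < a_i` and `v_j ≥ a_j` for all `j < i`;
`f^a_i(v) = v_i` otherwise. -/
def tarskiF {k : ℕ} (a v : Fin k → ℕ) : Fin k → ℕ := fun i =>
  if a i < v i ∧ ∀ j, j < i → v j ≤ a j then v i - 1
  else if v i < a i ∧ ∀ j, j < i → a j ≤ v j then v i + 1
  else v i

section

variable {k : ℕ} {a u v : Fin k → ℕ} {i : Fin k}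

theorem lt_apply_of_le_of_step_up (huv : u ≤ v) (hu : u i < a i ∧ ∀ j < i, a j ≤ u j)
    (hv : ¬(v i < a i ∧ ∀ j < i, a j ≤ v j)) : u i < v i :=
  (huv i).lt_of_ne fun hi ↦ hv ⟨hi ▸ hu.1, fun j hj ↦ (hu.2 j hj).trans (huv j)⟩

theorem lt_apply_of_le_of_step_down (huv : u ≤ v) (hv : a i < v i ∧ ∀ j < i, v j ≤ a j)
    (hu : ¬(a i < u i ∧ ∀ j < i, u j ≤ a j)) : u i < v i :=
  (huv i).lt_of_ne fun hi ↦ hu ⟨hi ▸ hv.1, fun j hj ↦ (huv j).trans (hv.2 j hj)⟩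

end

theorem monotone_tarskiF {k : ℕ} (a : Fin k → ℕ) : Monotone (tarskiF a) := by
  intro u v huv i
  have hi : u i ≤ v i := huv i
  simp only [tarskiF]
  split_ifs <;> try omega
  · exact lt_apply_of_le_of_step_up huv ‹_› ‹_›
  · exact Nat.le_sub_one_of_lt (lt_apply_of_le_of_step_down huv ‹_› ‹_›)

theorem tarskiF_monotone_general (k : ℕ)
    (a : Fin k → ℕ)
    (u v : Fin k → ℕ)
    (huv : u ≤ v) :
    tarskiF a u ≤ tarskiF a v :=
  monotone_tarskiF a huv

/-- For every `n ≥ 1` and `a` in the grid, `f^a` is monotone with respect to the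
componentwise order on the grid. -/
theorem tarskiF_monotone (n k : ℕ) (hn : 1 ≤ n)
    (a : Fin k → ℕ) (ha : ∀ i, a i < n)
    (u v : Fin k → ℕ) (hu : ∀ i, u i < n) (hv : ∀ i, v i < n)
    (huv : u ≤ v) :
    tarskiF a u ≤ tarskiF a v :=
  tarskiF_monotone_general k a u v huv
end

section
/- For every n, k ∈ ℕ with n ≥ 1, every a ∈ {0,1,…,n−1}^k, and every v ∈ {0,1,…,n−1}^k with v ≠ a, the point v is not a fixed point of f^a; that is, f^a(v) ≠ v. Consequently, the set of fixed points of f^a is exactly {a}. -/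
section

variable {k : ℕ} {a v : Fin k → ℕ} {i : Fin k}

theorem tarskiF_self (a : Fin k → ℕ) : tarskiF a a = a := by
  funext i
  simp [tarskiF]

theorem tarskiF_apply_of_gt (hgt : a i < v i) (hle : ∀ j < i, v j ≤ a j) :
    tarskiF a v i = v i - 1 :=
  if_pos ⟨hgt, hle⟩

theorem tarskiF_apply_of_lt (hlt : v i < a i) (hge : ∀ j < i, a j ≤ v j) :
    tarskiF a v i = v i + 1 := by
  rw [tarskiF, if_neg (fun h => hlt.not_gt h.1), if_pos ⟨hlt, hge⟩]

theorem tarskiF_ne_self (hva : v ≠ a) : tarskiF a v ≠ v := by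
  intro hfix
  rcases lt_or_gt_of_ne (show toLex v ≠ toLex a from hva) with ⟨i, heq, hlt⟩ | ⟨i, heq, hgt⟩
  · have hstep : tarskiF a v i = v i + 1 := tarskiF_apply_of_lt hlt fun j hj => (heq j hj).ge
    have := congrFun hfix i
    omega
  · have hstep : tarskiF a v i = v i - 1 := tarskiF_apply_of_gt hgt fun j hj => (heq j hj).ge
    have := congrFun hfix i
    change a i < v i at hgt
    omega

theorem tarskiF_eq_self_iff : tarskiF a v = v ↔ v = a :=
  ⟨fun hfix => of_not_not fun hva => tarskiF_ne_self hva hfix, fun h => h ▸ tarskiF_self a⟩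

end

theorem tarskiF_unique_fixed_point_general (n k : ℕ)
    (a : Fin k → ℕ) (ha : ∀ i, a i < n)
    (v : Fin k → ℕ) (hva : v ≠ a) :
    tarskiF a v ≠ v ∧
      {w : Fin k → ℕ | (∀ i, w i < n) ∧ tarskiF a w = w} = {a} := by
  refine ⟨tarskiF_ne_self hva, ?_⟩
  ext w
  simp only [Set.mem_ofPred_eq, Set.mem_singleton_iff, tarskiF_eq_self_iff]
  exact ⟨And.right, fun h => ⟨h ▸ ha, h⟩⟩

/-- Every `v ≠ a` in the grid is not a fixed point of `f^a`; consequently the set of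
fixed points of `f^a` on the grid is exactly `{a}`. -/
theorem tarskiF_unique_fixed_point (n k : ℕ) (hn : 1 ≤ n)
    (a : Fin k → ℕ) (ha : ∀ i, a i < n)
    (v : Fin k → ℕ) (hv : ∀ i, v i < n) (hva : v ≠ a) :
    tarskiF a v ≠ v ∧
      {w : Fin k → ℕ | (∀ i, w i < n) ∧ tarskiF a w = w} = {a} :=
  tarskiF_unique_fixed_point_general n k a ha v hva
end

section
/- For every n, k ∈ ℕ with n ≥ 1 and every fixed v ∈ {0,1,…,n−1}^k, the set of possible query answers Q_v = { f^a(v) : a ∈ {0,1,…,n−1}^k } has cardinality at most (k+1)^2. -/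
/-!
`f^a(v)` decreases `v` exactly at the first coordinate where `a < v`, increases it exactly at
the first coordinate where `v < a`, and leaves the other coordinates alone. So it is
determined by a pair of optional coordinates, of which there are `(k + 1)^2`.
-/

def shiftAt {k : ℕ} (v : Fin k → ℕ) (down up : Option (Fin k)) : Fin k → ℕ := fun i =>
  if down = some i then v i - 1 else if up = some i then v i + 1 else v i

theorem Fin.find?_lt_eq_some_iff {k : ℕ} {α : Type*} [LinearOrder α] (a v : Fin k → α)
    (i : Fin k) :
    Fin.find? (fun j => decide (a j < v j)) = some i ↔ a i < v i ∧ ∀ j, j < i → v j ≤ a j := by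
  simp only [Fin.find?_eq_some_iff, decide_eq_true_eq, decide_eq_false_iff_not, not_lt]

theorem tarskiF_eq_shiftAt {k : ℕ} (a v : Fin k → ℕ) :
    tarskiF a v = shiftAt v (Fin.find? fun j => decide (a j < v j))
      (Fin.find? fun j => decide (v j < a j)) := by
  funext i
  simp only [tarskiF, shiftAt, Fin.find?_lt_eq_some_iff]

theorem Set.ncard_range_le {α β : Type*} [Finite α] (f : α → β) :
    (Set.range f).ncard ≤ Nat.card α := by
  rw [← Set.image_univ, ← Set.ncard_univ α]
  exact Set.ncard_image_le Set.finite_univ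

theorem tarskiF_answer_set_card_le_general (n k : ℕ)
    (v : Fin k → ℕ) :
    Set.ncard {y : Fin k → ℕ | ∃ a : Fin k → ℕ, (∀ i, a i < n) ∧ tarskiF a v = y}
      ≤ (k + 1) ^ 2 := by
  let answer : Option (Fin k) × Option (Fin k) → (Fin k → ℕ) := fun p => shiftAt v p.1 p.2
  have hsub : {y : Fin k → ℕ | ∃ a : Fin k → ℕ, (∀ i, a i < n) ∧ tarskiF a v = y}
      ⊆ Set.range answer := by
    rintro y ⟨a, -, rfl⟩
    exact ⟨(_, _), (tarskiF_eq_shiftAt a v).symm⟩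
  calc _ ≤ (Set.range answer).ncard := Set.ncard_le_ncard hsub (Set.finite_range answer)
    _ ≤ Nat.card (Option (Fin k) × Option (Fin k)) := Set.ncard_range_le answer
    _ = (k + 1) ^ 2 := by simp [sq]

/-- For every fixed query point `v`, the set `Q_v = { f^a(v) : a ∈ {0,…,n-1}^k }` of
possible answers has cardinality at most `(k+1)^2`. -/
theorem tarskiF_answer_set_card_le (n k : ℕ) (hn : 1 ≤ n)
    (v : Fin k → ℕ) (hv : ∀ i, v i < n) :
    Set.ncard {y : Fin k → ℕ | ∃ a : Fin k → ℕ, (∀ i, a i < n) ∧ tarskiF a v = y}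
      ≤ (k + 1) ^ 2 :=
  tarskiF_answer_set_card_le_general n k v
end

section
/- (Hypercube instance feedback structure, case (ii) of the information argument.) Let k ∈ ℕ, let a ∈ {0,1}^k, and let v ∈ {0,1}^k. If there is no index i ∈ {1,…,k} with v_i = 0 and f^a_i(v) = 1, then a_j = 0 for every index j ∈ {1,…,k} with v_j = 0. Symmetrically, if there is no index i with v_i = 1 and f^a_i(v) = 0, then a_j = 1 for every index j with v_j = 1. -/
/-!
At the first coordinate where `v` lies strictly below `a`, every earlier coordinate
satisfies `a_j ≤ v_j`, so `f^a` raises `v` there; on the hypercube this is a coordinate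
with `v_i = 0` and `f^a_i(v) = 1`. Dually, `f^a` lowers `v` at the first coordinate where
`v` lies strictly above `a`.
-/

section

variable {k : ℕ} {a v : Fin k → ℕ}

theorem tarskiF_eq_sub_one {i : Fin k} (hi : a i < v i) (hlt : ∀ j < i, v j ≤ a j) :
    tarskiF a v i = v i - 1 :=
  if_pos ⟨hi, hlt⟩

theorem tarskiF_eq_add_one {i : Fin k} (hi : v i < a i) (hlt : ∀ j < i, a j ≤ v j) :
    tarskiF a v i = v i + 1 := by
  rw [tarskiF, if_neg fun h => (lt_asymm hi h.1).elim, if_pos ⟨hi, hlt⟩]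

theorem exists_tarskiF_eq_add_one (h : ∃ j, v j < a j) :
    ∃ i, v i < a i ∧ tarskiF a v i = v i + 1 := by
  obtain ⟨i, hi, hmin⟩ := wellFounded_lt.has_min {j | v j < a j} h
  exact ⟨i, hi, tarskiF_eq_add_one hi fun j hj => not_lt.mp fun hvj => hmin j hvj hj⟩

theorem exists_tarskiF_eq_sub_one (h : ∃ j, a j < v j) :
    ∃ i, a i < v i ∧ tarskiF a v i = v i - 1 := by
  obtain ⟨i, hi, hmin⟩ := wellFounded_lt.has_min {j | a j < v j} h
  exact ⟨i, hi, tarskiF_eq_sub_one hi fun j hj => not_lt.mp fun hvj => hmin j hvj hj⟩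

end

/-- Hypercube feedback, case (ii): on the Boolean hypercube `{0,1}^k`, if no index `i`
has `v_i = 0` and `f^a_i(v) = 1`, then `a_j = 0` for every `j` with `v_j = 0`;
symmetrically, if no index `i` has `v_i = 1` and `f^a_i(v) = 0`, then `a_j = 1`
for every `j` with `v_j = 1`. -/
theorem tarskiF_hypercube_case_ii (k : ℕ)
    (a : Fin k → ℕ) (ha : ∀ i, a i ≤ 1)
    (v : Fin k → ℕ) (hv : ∀ i, v i ≤ 1) :
    ((¬ ∃ i : Fin k, v i = 0 ∧ tarskiF a v i = 1) →
      ∀ j : Fin k, v j = 0 → a j = 0) ∧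
    ((¬ ∃ i : Fin k, v i = 1 ∧ tarskiF a v i = 0) →
      ∀ j : Fin k, v j = 1 → a j = 1) := by
  constructor
  · intro hno j hvj
    by_contra haj
    obtain ⟨i, hi, hfi⟩ := exists_tarskiF_eq_add_one (a := a) (v := v) ⟨j, by omega⟩
    have hvi : v i = 0 := by have := ha i; omega
    exact hno ⟨i, hvi, by rw [hfi, hvi]⟩
  · intro hno j hvj
    by_contra haj
    obtain ⟨i, hi, hfi⟩ := exists_tarskiF_eq_sub_one (a := a) (v := v) ⟨j, by have := ha j; omega⟩
    have hvi : v i = 1 := by have := hv i; omega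
    exact hno ⟨i, hvi, by rw [hfi, hvi]⟩
end
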